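/- arXiv:1803.04226 — 2 statements merged into one kernel-verified Lean document; each statement's English description precedes it below -/
import Mathlib

section
/- Let n ≥ 3, δ = (n-2)/2. Let V = (v₁, v₂) : ℝ → ℝ² be a bounded nonnegative C² solution of vᵢ'' - δ²vᵢ + (n(n-2)/4)|V|^{4/(n-2)}vᵢ = 0. If v₁(t) → C₁ as t → +∞ for some constant C₁ > 0 and v₂(t)² → C₂ ≥ 0 uniformly with derivatives as t → +∞, then C₁ ≤ ((n-2)/n)^{(n-2)/4} and -δ²C₁ + (n(n-2)/4)(C₁² + C₂)^{2/(n-2)}C₁ = 0. -/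
open Filter Topology

/-- Limits of components of a bounded nonnegative solution of the coupled
Fowler-type system at infinity satisfy the limiting algebraic equation, and in
particular `C₁ ≤ ((n-2)/n)^{(n-2)/4}`. -/
theorem limit_bound (n : ℕ) (hn : 3 ≤ n) (δ : ℝ) (hδ : δ = ((n : ℝ) - 2) / 2)
    (v₁ v₂ : ℝ → ℝ) (h1 : ContDiff ℝ 2 v₁) (h2 : ContDiff ℝ 2 v₂)
    (hnonneg : ∀ t : ℝ, 0 ≤ v₁ t ∧ 0 ≤ v₂ t)
    (hbdd : ∃ M : ℝ, ∀ t : ℝ, v₁ t ≤ M ∧ v₂ t ≤ M)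
    (hode₁ : ∀ t : ℝ, deriv (deriv v₁) t - δ ^ 2 * v₁ t
      + ((n : ℝ) * ((n : ℝ) - 2) / 4) * (v₁ t ^ 2 + v₂ t ^ 2) ^ (2 / ((n : ℝ) - 2)) * v₁ t = 0)
    (hode₂ : ∀ t : ℝ, deriv (deriv v₂) t - δ ^ 2 * v₂ t
      + ((n : ℝ) * ((n : ℝ) - 2) / 4) * (v₁ t ^ 2 + v₂ t ^ 2) ^ (2 / ((n : ℝ) - 2)) * v₂ t = 0)
    (C₁ C₂ : ℝ) (hC₁ : 0 < C₁) (hC₂ : 0 ≤ C₂)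
    (hlim₁ : Tendsto v₁ atTop (𝓝 C₁))
    (hlim₁' : Tendsto (deriv v₁) atTop (𝓝 0))
    (hlim₁'' : Tendsto (deriv (deriv v₁)) atTop (𝓝 0))
    (hlim₂ : Tendsto (fun t => v₂ t ^ 2) atTop (𝓝 C₂))
    (hlim₂' : Tendsto (deriv (fun t => v₂ t ^ 2)) atTop (𝓝 0)) :
    C₁ ≤ (((n : ℝ) - 2) / (n : ℝ)) ^ (((n : ℝ) - 2) / 4)
    ∧ -δ ^ 2 * C₁
        + ((n : ℝ) * ((n : ℝ) - 2) / 4) * (C₁ ^ 2 + C₂) ^ (2 / ((n : ℝ) - 2)) * C₁ = 0 := by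
  have hn2 : (2:ℝ) < (n:ℝ) := by exact_mod_cast (by omega : 2 < n)
  have hnm2 : (0:ℝ) < (n:ℝ) - 2 := by linarith
  have hnpos : (0:ℝ) < (n:ℝ) := by linarith
  set e : ℝ := 2 / ((n:ℝ) - 2) with he
  have hepos : 0 < e := by positivity
  set K : ℝ := (n:ℝ) * ((n:ℝ) - 2) / 4 with hK
  have hKpos : 0 < K := by positivity
  set X : ℝ := C₁ ^ 2 + C₂ with hX
  have hXpos : 0 < X := by positivity
  have hbase : Tendsto (fun t => v₁ t ^ 2 + v₂ t ^ 2) atTop (𝓝 X) :=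
    (hlim₁.pow 2).add hlim₂
  have hrpow : Tendsto (fun t => (v₁ t ^ 2 + v₂ t ^ 2) ^ e) atTop (𝓝 (X ^ e)) :=
    ((Real.continuousAt_rpow_const X e (Or.inl hXpos.ne')).tendsto).comp hbase
  have hmain : Tendsto
      (fun t => deriv (deriv v₁) t - δ ^ 2 * v₁ t + K * (v₁ t ^ 2 + v₂ t ^ 2) ^ e * v₁ t)
      atTop (𝓝 (0 - δ ^ 2 * C₁ + K * X ^ e * C₁)) :=
    (hlim₁''.sub (hlim₁.const_mul _)).add ((hrpow.const_mul _).mul hlim₁)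
  have hzero : Tendsto
      (fun t => deriv (deriv v₁) t - δ ^ 2 * v₁ t + K * (v₁ t ^ 2 + v₂ t ^ 2) ^ e * v₁ t)
      atTop (𝓝 (0:ℝ)) := by
    have : (fun t => deriv (deriv v₁) t - δ ^ 2 * v₁ t
        + K * (v₁ t ^ 2 + v₂ t ^ 2) ^ e * v₁ t) = fun _ => (0:ℝ) := funext fun t => hode₁ t
    rw [this]; exact tendsto_const_nhds
  have heq0 : 0 - δ ^ 2 * C₁ + K * X ^ e * C₁ = 0 := tendsto_nhds_unique hmain hzero
  have heq : K * X ^ e = δ ^ 2 := by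
    have h := heq0
    have : (K * X ^ e) * C₁ = δ ^ 2 * C₁ := by linarith
    exact mul_right_cancel₀ hC₁.ne' this
  have hXe : X ^ e = ((n:ℝ) - 2) / (n:ℝ) := by
    have hδ2 : δ ^ 2 = ((n:ℝ) - 2) ^ 2 / 4 := by rw [hδ]; ring
    rw [hδ2] at heq
    field_simp [hK] at heq ⊢
    nlinarith [heq]
  have hXval : X = (((n:ℝ) - 2) / (n:ℝ)) ^ (((n:ℝ) - 2) / 2) := by
    have hinv : e⁻¹ = ((n:ℝ) - 2) / 2 := by
      rw [he]; field_simp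
    have := Real.rpow_rpow_inv hXpos.le hepos.ne'
    rw [hXe] at this
    rw [← this, hinv]
  constructor
  · have hbpos : (0:ℝ) ≤ ((n:ℝ) - 2) / (n:ℝ) := by positivity
    set B : ℝ := (((n:ℝ) - 2) / (n:ℝ)) ^ (((n:ℝ) - 2) / 4) with hB
    have hBnn : 0 ≤ B := Real.rpow_nonneg hbpos _
    have hB2 : B ^ 2 = (((n:ℝ) - 2) / (n:ℝ)) ^ (((n:ℝ) - 2) / 2) := by
      rw [hB, sq, ← Real.rpow_add (by positivity)]
      ring_nf
    have hle : C₁ ^ 2 ≤ B ^ 2 := by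
      rw [hB2, ← hXval]; simpa [hX] using hC₂
    have := Real.sqrt_le_sqrt hle
    rwa [Real.sqrt_sq hC₁.le, Real.sqrt_sq hBnn] at this
  · have : -δ ^ 2 * C₁ + K * X ^ e * C₁ = 0 := by linarith
    simpa [hK, hX, he] using this
end

section
/- Let γ > 0, n ∈ {3,4,5}, and define the linear operator L̄(f) = f'' + γf' - (((n-2)/2)² + γ)f. Let γ₂ > 0 be such that t ↦ e^{((2-n)/2 - γ₂)t} lies in the kernel of L̄ (i.e., ((2-n)/2 - γ₂)² + γ((2-n)/2 - γ₂) = ((n-2)/2)² + γ). For constants c₁ > 0, λ ∈ ℝ, ε > 0 and a(n) = 1/(2(4-n) - γ₁) with γ₁ = ((8-n)/2)γ small, the function h_λ(t) = a(n)c₁ε²e^{(2-n)λ}e^{((n-6)/2)t}(1 - e^{(4-n-γ₂)(t-λ)}) satisfies h_λ(λ) = 0, h_λ(t) ≥ 0 for t ≤ λ, and L̄(h_λ)(t) = c₁ε²e^{((n-6)/2)t}e^{(2-n)λ} for all t. -/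
/-!
Writing `a = (n-6)/2` and `b = (2-n)/2 - γ₂ = a + (4-n-γ₂)`, the barrier is
`h = K/D · (e^{at} - e^{-(4-n-γ₂)λ} e^{bt})` with `K = c₁ε²e^{(2-n)λ}`. The operator `L̄` multiplies
`e^{rt}` by its characteristic polynomial `r² + γr - (((n-2)/2)² + γ)`, which vanishes at `b` and
equals `D = 2(4-n) - γ₁` at `a`; hence `L̄ h = K e^{at}`. Nonnegativity for `t ≤ λ` holds because
`D` and the rate `4-n-γ₂` have the same sign in each of the cases `n = 3, 4, 5`.
-/

open Real

lemma deriv_const_mul_exp_add_const_mul_exp (C₁ C₂ a b : ℝ) :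
    deriv (fun t => C₁ * exp (a * t) + C₂ * exp (b * t))
      = fun t => C₁ * a * exp (a * t) + C₂ * b * exp (b * t) := by
  funext t
  have hexp (r : ℝ) : HasDerivAt (fun t => exp (r * t)) (exp (r * t) * r) t := by
    simpa using ((hasDerivAt_id t).const_mul r).exp
  exact (((hexp a).const_mul C₁).add ((hexp b).const_mul C₂)).deriv.trans (by ring)

lemma secondOrder_const_mul_exp_add_const_mul_exp (γ c C₁ C₂ a b t : ℝ) :
    let f := fun t => C₁ * exp (a * t) + C₂ * exp (b * t)
    deriv (deriv f) t + γ * deriv f t - c * f t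
      = C₁ * (a ^ 2 + γ * a - c) * exp (a * t) + C₂ * (b ^ 2 + γ * b - c) * exp (b * t) := by
  simp only [deriv_const_mul_exp_add_const_mul_exp]
  ring

lemma exp_mul_one_sub_exp_mul_sub (a μ lam t : ℝ) :
    exp (a * t) * (1 - exp (μ * (t - lam)))
      = exp (a * t) - exp (-μ * lam) * exp ((a + μ) * t) := by
  rw [mul_sub, mul_one, ← exp_add, ← exp_add]
  congr 2
  ring

lemma one_sub_exp_mul_div_nonneg {μ D s : ℝ} (hμD : 0 ≤ μ * D) (hs : s ≤ 0) :
    0 ≤ (1 - exp (μ * s)) / D := by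
  rcases nonneg_and_nonneg_or_nonpos_and_nonpos_of_mul_nonneg hμD with ⟨hμ, hD⟩ | ⟨hμ, hD⟩
  · exact div_nonneg (by linarith [exp_le_one_iff.mpr (mul_nonpos_of_nonneg_of_nonpos hμ hs)]) hD
  · exact div_nonneg_of_nonpos (by linarith [one_le_exp (mul_nonneg_of_nonpos_of_nonpos hμ hs)]) hD

lemma barrier_rate_mul_denominator_pos {n : ℕ} (hn : 3 ≤ n ∧ n ≤ 5) {γ γ₁ γ₂ : ℝ} (hγ : 0 < γ)
    (hγ₁ : γ₁ = ((8 - (n : ℝ)) / 2) * γ) (hγ₂ : 0 < γ₂) (hsmall : n = 3 → γ₁ < 2 ∧ γ₂ < 1) :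
    0 < (4 - (n : ℝ) - γ₂) * (2 * (4 - (n : ℝ)) - γ₁) := by
  obtain ⟨hn3, hn5⟩ := hn
  interval_cases n
  · obtain ⟨hγ₁2, hγ₂1⟩ := hsmall rfl
    push_cast
    nlinarith
  all_goals subst hγ₁; push_cast; nlinarith

theorem barrier_construction_general (n : ℕ) (hn : 3 ≤ n ∧ n ≤ 5)
    (γ : ℝ) (hγ : 0 < γ)
    (γ₁ : ℝ) (hγ₁ : γ₁ = ((8 - (n : ℝ)) / 2) * γ)
    (γ₂ : ℝ) (hγ₂ : 0 < γ₂)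
    (hker : ((2 - (n : ℝ)) / 2 - γ₂) ^ 2 + γ * ((2 - (n : ℝ)) / 2 - γ₂)
      = (((n : ℝ) - 2) / 2) ^ 2 + γ)
    (hsmall : n = 3 → γ₁ < 2 ∧ γ₂ < 1)
    (c₁ : ℝ) (hc₁ : 0 < c₁) (lam : ℝ) (ε : ℝ)
    (h : ℝ → ℝ)
    (hh : ∀ t : ℝ, h t = (1 / (2 * (4 - (n : ℝ)) - γ₁)) * c₁ * ε ^ 2
      * Real.exp ((2 - (n : ℝ)) * lam) * Real.exp ((((n : ℝ) - 6) / 2) * t)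
      * (1 - Real.exp ((4 - (n : ℝ) - γ₂) * (t - lam)))) :
    h lam = 0
    ∧ (∀ t : ℝ, t ≤ lam → 0 ≤ h t)
    ∧ (∀ t : ℝ,
        deriv (deriv h) t + γ * deriv h t - ((((n : ℝ) - 2) / 2) ^ 2 + γ) * h t
          = c₁ * ε ^ 2 * Real.exp ((((n : ℝ) - 6) / 2) * t)
            * Real.exp ((2 - (n : ℝ)) * lam)) := by
  set μ : ℝ := 4 - (n : ℝ) - γ₂
  set D : ℝ := 2 * (4 - (n : ℝ)) - γ₁
  set K : ℝ := c₁ * ε ^ 2 * exp ((2 - (n : ℝ)) * lam)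
  have hμD := barrier_rate_mul_denominator_pos hn hγ hγ₁ hγ₂ hsmall
  have hD : D ≠ 0 := right_ne_zero_of_mul hμD.ne'
  refine ⟨by simp [hh], fun t ht => ?_, fun t => ?_⟩
  · have hK : 0 ≤ K * exp ((((n : ℝ) - 6) / 2) * t) := by positivity
    have hsign := one_sub_exp_mul_div_nonneg (s := t - lam) hμD.le (by linarith)
    calc (0 : ℝ) ≤ (1 - exp (μ * (t - lam))) / D * (K * exp ((((n : ℝ) - 6) / 2) * t)) :=
          mul_nonneg hsign hK
      _ = h t := by rw [hh]; ring
  · have hsum : h = fun t => K / D * exp ((((n : ℝ) - 6) / 2) * t)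
        + (-(K / D) * exp (-μ * lam)) * exp ((((n : ℝ) - 6) / 2 + μ) * t) := by
      funext s
      rw [hh, mul_assoc _ (exp _), exp_mul_one_sub_exp_mul_sub]
      ring
    have hchar_a : (((n : ℝ) - 6) / 2) ^ 2 + γ * (((n : ℝ) - 6) / 2)
        - ((((n : ℝ) - 2) / 2) ^ 2 + γ) = D := by
      simp only [D, hγ₁]; ring
    have hchar_b : (((n : ℝ) - 6) / 2 + μ) ^ 2 + γ * (((n : ℝ) - 6) / 2 + μ)
        - ((((n : ℝ) - 2) / 2) ^ 2 + γ) = 0 := by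
      simp only [μ]; linear_combination hker
    rw [hsum, secondOrder_const_mul_exp_add_const_mul_exp, hchar_a, hchar_b,
      div_mul_cancel₀ K hD]
    ring

/-- Barrier construction for the moving-plane argument: the explicit function
`h_λ` vanishes at `λ`, is nonnegative for `t ≤ λ`, and satisfies
`L̄(h_λ) = c₁ ε² e^{((n-6)/2)t} e^{(2-n)λ}` for
`L̄(f) = f'' + γ f' - (((n-2)/2)² + γ) f`. -/
theorem barrier_construction (n : ℕ) (hn : 3 ≤ n ∧ n ≤ 5)
    (γ : ℝ) (hγ : 0 < γ)
    (γ₁ : ℝ) (hγ₁ : γ₁ = ((8 - (n : ℝ)) / 2) * γ)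
    (γ₂ : ℝ) (hγ₂ : 0 < γ₂)
    (hker : ((2 - (n : ℝ)) / 2 - γ₂) ^ 2 + γ * ((2 - (n : ℝ)) / 2 - γ₂)
      = (((n : ℝ) - 2) / 2) ^ 2 + γ)
    (hsmall : n = 3 → γ₁ < 2 ∧ γ₂ < 1)
    (c₁ : ℝ) (hc₁ : 0 < c₁) (lam : ℝ) (ε : ℝ) (hε : 0 < ε)
    (h : ℝ → ℝ)
    (hh : ∀ t : ℝ, h t = (1 / (2 * (4 - (n : ℝ)) - γ₁)) * c₁ * ε ^ 2
      * Real.exp ((2 - (n : ℝ)) * lam) * Real.exp ((((n : ℝ) - 6) / 2) * t)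
      * (1 - Real.exp ((4 - (n : ℝ) - γ₂) * (t - lam)))) :
    h lam = 0
    ∧ (∀ t : ℝ, t ≤ lam → 0 ≤ h t)
    ∧ (∀ t : ℝ,
        deriv (deriv h) t + γ * deriv h t - ((((n : ℝ) - 2) / 2) ^ 2 + γ) * h t
          = c₁ * ε ^ 2 * Real.exp ((((n : ℝ) - 6) / 2) * t)
            * Real.exp ((2 - (n : ℝ)) * lam)) :=
  barrier_construction_general n hn γ hγ γ₁ hγ₁ γ₂ hγ₂ hker hsmall c₁ hc₁ lam ε h hh
end
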